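/- There is no friendly vertex labeling f: V → {0,1} of the Petersen graph for which exactly 5 of its 15 edges have both endpoints with the same label. -/
import Mathlib


open Finset

/-- A vertex labeling `f : V → {0,1}` is friendly if the number of vertices labeled `0`
and the number labeled `1` differ by at most `1`. -/
def Friendly {V : Type*} [Fintype V] [DecidableEq V] (f : V → Fin 2) : Prop :=
  |((univ.filter fun v => f v = 0).card : ℤ) - ((univ.filter fun v => f v = 1).card : ℤ)| ≤ 1

/-- The 15 edges of the Petersen graph: outer 5-cycle `a₁a₂a₃a₄a₅`
(vertices `0, …, 4 : Fin 10`), inner pentagram `b₁b₃b₅b₂b₄` (`bᵢ` is vertex `4 + i`,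
with `bᵢ` adjacent to `b_{i+2}`, indices mod 5), and spokes `aᵢbᵢ`. -/
def petersenEdges : Fin 15 → Fin 10 × Fin 10 :=
  ![(0, 1), (1, 2), (2, 3), (3, 4), (4, 0),
    (5, 7), (7, 9), (9, 6), (6, 8), (8, 5),
    (0, 5), (1, 6), (2, 7), (3, 8), (4, 9)]

lemma mono_if (a b : Fin 2) : (if a = b then (1:ℕ) else 0) = (a.val + b.val + 1) % 2 := by
  fin_cases a <;> fin_cases b <;> rfl

lemma one_if (a : Fin 2) : (if a = 1 then (1:ℕ) else 0) = a.val := by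
  fin_cases a <;> rfl

lemma zero_if (a : Fin 2) : (if a = 0 then (1:ℕ) else 0) = 1 - a.val := by
  fin_cases a <;> rfl

/-- There is no friendly vertex labeling of the Petersen graph under which exactly 5 of
its 15 edges are monochromatic (have both endpoints with the same label). -/
theorem petersen_no_friendly_five_monochromatic :
    ¬ ∃ f : Fin 10 → Fin 2, Friendly f ∧
      ((univ : Finset (Fin 15)).filter fun i =>
        f (petersenEdges i).1 = f (petersenEdges i).2).card = 5 := by
  rintro ⟨f, hF, hC⟩
  have h0 : ((univ : Finset (Fin 10)).filter fun v => f v = 0).card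
      = ∑ v : Fin 10, (1 - (f v).val) := by
    rw [Finset.card_filter]; exact Finset.sum_congr rfl fun v _ => zero_if (f v)
  have h1 : ((univ : Finset (Fin 10)).filter fun v => f v = 1).card
      = ∑ v : Fin 10, (f v).val := by
    rw [Finset.card_filter]; exact Finset.sum_congr rfl fun v _ => one_if (f v)
  have hCe : (∑ i : Fin 15,
      ((f (petersenEdges i).1).val + (f (petersenEdges i).2).val + 1) % 2) = 5 := by
    rw [← hC, Finset.card_filter]
    exact Finset.sum_congr rfl fun i _ => (mono_if _ _).symm
  have hsum : (∑ v : Fin 10, (1 - (f v).val)) + (∑ v : Fin 10, (f v).val) = 10 := by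
    rw [← Finset.sum_add_distrib]
    have : ∀ v ∈ (univ : Finset (Fin 10)), (1 - (f v).val) + (f v).val = 1 := by
      intro v _
      have := (f v).isLt
      omega
    rw [Finset.sum_congr rfl this]
    simp
  unfold Friendly at hF
  rw [abs_le, h0, h1] at hF
  have hB : (∑ v : Fin 10, (f v).val) = 5 := by omega
  simp only [Fin.sum_univ_succ, Fin.sum_univ_zero, petersenEdges] at hCe hB
  simp only [Matrix.cons_val_zero, Matrix.cons_val_one, Matrix.head_cons,
    Matrix.cons_val_succ] at hCe
  simp only [show (Fin.succ 0 : Fin 10) = 1 from rfl,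
    show ((Fin.succ 0).succ : Fin 10) = 2 from rfl,
    show ((Fin.succ 0).succ.succ : Fin 10) = 3 from rfl,
    show ((Fin.succ 0).succ.succ.succ : Fin 10) = 4 from rfl,
    show ((Fin.succ 0).succ.succ.succ.succ : Fin 10) = 5 from rfl,
    show ((Fin.succ 0).succ.succ.succ.succ.succ : Fin 10) = 6 from rfl,
    show ((Fin.succ 0).succ.succ.succ.succ.succ.succ : Fin 10) = 7 from rfl,
    show ((Fin.succ 0).succ.succ.succ.succ.succ.succ.succ : Fin 10) = 8 from rfl,
    show ((Fin.succ 0).succ.succ.succ.succ.succ.succ.succ.succ : Fin 10) = 9 from rfl] at hB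
  have l0 := (f 0).isLt; have l1 := (f 1).isLt; have l2 := (f 2).isLt
  have l3 := (f 3).isLt; have l4 := (f 4).isLt; have l5 := (f 5).isLt
  have l6 := (f 6).isLt; have l7 := (f 7).isLt; have l8 := (f 8).isLt
  have l9 := (f 9).isLt
  omega
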